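/- Let L₀, …, L_{n−1} (indices mod n) be lines in ℍ² with Lᵢ ⊕ L_{i+1} = ℍ² for all i, and let n ≥ 2 be even. Then the ℍ-linear endomorphism Q_{n−1} ∘ Q_{n−3} ∘ ⋯ ∘ Q₃ ∘ Q₁ ∘ P₀ + Q_{n−2} ∘ Q_{n−4} ∘ ⋯ ∘ Q₂ ∘ Q₀ of ℍ² is bijective. (This endomorphism is the leading coefficient H_max of the polynomial holonomy H(λ) of a closed polygon of even length; its invertibility is established in the proof of Theorem 6.1 on the spectral curve of a closed polygon in S⁴.) -/
import Mathlib


noncomputable section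

/-- The quaternions. -/
abbrev H : Type := Quaternion ℝ

/-- `ℍ²`, pairs of quaternions, regarded as a right `ℍ`-module
(i.e. a module over the opposite ring `ℍᵐᵒᵖ`). -/
abbrev H2 : Type := Fin 2 → H

/-- A line in `ℍ²`: a one-dimensional right `ℍ`-submodule. -/
def IsLine (L : Submodule Hᵐᵒᵖ H2) : Prop :=
  ∃ v : H2, v ≠ 0 ∧ L = Submodule.span Hᵐᵒᵖ {v}

/-- `Q_{n-1} ∘ Q_{n-3} ∘ ⋯ ∘ Q₃ ∘ Q₁ ∘ P₀` (for `n` even). -/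
def oddTerm (n : ℕ) (P Q : ZMod n → (H2 →ₗ[Hᵐᵒᵖ] H2)) : H2 →ₗ[Hᵐᵒᵖ] H2 :=
  (List.range (n / 2)).foldl (fun A k => Q ((2 * k + 1 : ℕ) : ZMod n) ∘ₗ A) (P 0)

/-- `Q_{n-2} ∘ Q_{n-4} ∘ ⋯ ∘ Q₂ ∘ Q₀` (for `n` even). -/
def evenTerm (n : ℕ) (Q : ZMod n → (H2 →ₗ[Hᵐᵒᵖ] H2)) : H2 →ₗ[Hᵐᵒᵖ] H2 :=
  (List.range (n / 2)).foldl (fun A k => Q ((2 * k : ℕ) : ZMod n) ∘ₗ A) LinearMap.id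

instance : Module.Finite Hᵐᵒᵖ H := ⟨⟨{1}, by
  rw [eq_top_iff]
  intro x _
  have : x = MulOpposite.op x • (1 : H) := by simp
  rw [this]
  exact Submodule.smul_mem _ _ (Submodule.subset_span (by simp))⟩⟩

/-- The leading coefficient `H_max` of the polynomial holonomy `H(λ)` of a closed
polygon of even length is invertible (proof of Theorem 6.1). -/
theorem Hmax_bijective_of_even
    (n : ℕ) (hn : 2 ≤ n) (hev : Even n)
    (L : ZMod n → Submodule Hᵐᵒᵖ H2)
    (hline : ∀ i, IsLine (L i))
    (hcompl : ∀ i, IsCompl (L i) (L (i + 1)))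
    (P Q : ZMod n → (H2 →ₗ[Hᵐᵒᵖ] H2))
    (hP : ∀ i v, P i v ∈ L i) (hQ : ∀ i v, Q i v ∈ L (i + 1))
    (hPQ : ∀ i v, P i v + Q i v = v) :
    Function.Bijective ⇑(oddTerm n P Q + evenTerm n Q) := by
  -- kernel of `Q i` is contained in `L i`
  have hQker : ∀ i (v : H2), Q i v = 0 → v ∈ L i := by
    intro i v h
    have h2 := hPQ i v
    rw [h, add_zero] at h2
    exact h2 ▸ hP i v
  -- disjointness
  have hdisj : ∀ i (v : H2), v ∈ L i → v ∈ L (i + 1) → v = 0 := fun i v h1 h2 =>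
    Submodule.disjoint_def.mp (hcompl i).disjoint v h1 h2
  -- the partial odd products
  set F : ℕ → (H2 →ₗ[Hᵐᵒᵖ] H2) := fun m =>
    (List.range m).foldl (fun A k => Q ((2 * k + 1 : ℕ) : ZMod n) ∘ₗ A) (P 0) with hFdef
  have hFsucc : ∀ m, F (m + 1) = Q ((2 * m + 1 : ℕ) : ZMod n) ∘ₗ F m := by
    intro m
    simp [hFdef, List.range_succ]
  have hF : ∀ m, (∀ v, F m v ∈ L ((2 * m : ℕ) : ZMod n)) ∧
      (∀ v, F m v = 0 → v ∈ L 1) := by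
    intro m
    induction m with
    | zero =>
      constructor
      · intro v
        simpa [hFdef] using hP 0 v
      · intro v hv
        simp only [hFdef, List.range_zero, List.foldl_nil] at hv
        have h2 := hPQ 0 v
        rw [hv, zero_add] at h2
        have := hQ 0 v
        rw [h2, zero_add] at this
        exact this
    | succ m ih =>
      constructor
      · intro v
        rw [hFsucc, LinearMap.comp_apply]
        have : ((2 * m + 1 : ℕ) : ZMod n) + 1 = ((2 * (m + 1) : ℕ) : ZMod n) := by
          push_cast; ring
        exact this ▸ hQ _ (F m v)
      · intro v hv
        rw [hFsucc, LinearMap.comp_apply] at hv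
        have h1 : F m v ∈ L (((2 * m : ℕ) : ZMod n) + 1) := by
          have : ((2 * m + 1 : ℕ) : ZMod n) = ((2 * m : ℕ) : ZMod n) + 1 := by
            push_cast; ring
          exact this ▸ hQker _ _ hv
        exact ih.2 v (hdisj _ _ (ih.1 v) h1)
  -- the partial even products
  set G : ℕ → (H2 →ₗ[Hᵐᵒᵖ] H2) := fun m =>
    (List.range m).foldl (fun A k => Q ((2 * k : ℕ) : ZMod n) ∘ₗ A) LinearMap.id with hGdef
  have hGsucc : ∀ m, G (m + 1) = Q ((2 * m : ℕ) : ZMod n) ∘ₗ G m := by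
    intro m
    simp [hGdef, List.range_succ]
  have hG : ∀ m, (∀ v, G (m + 1) v ∈ L ((2 * m + 1 : ℕ) : ZMod n)) ∧
      (∀ v, G (m + 1) v = 0 → v ∈ L 0) := by
    intro m
    induction m with
    | zero =>
      constructor
      · intro v
        rw [hGsucc, LinearMap.comp_apply]
        have h := hQ ((2 * 0 : ℕ) : ZMod n) (G 0 v)
        simpa using h
      · intro v hv
        rw [hGsucc, LinearMap.comp_apply] at hv
        have := hQker _ _ hv
        simpa [hGdef] using this
    | succ m ih =>
      constructor
      · intro v
        rw [hGsucc, LinearMap.comp_apply]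
        have h := hQ ((2 * (m + 1) : ℕ) : ZMod n) (G (m + 1) v)
        have h2 : ((2 * (m + 1) : ℕ) : ZMod n) + 1 = ((2 * (m + 1) + 1 : ℕ) : ZMod n) := by
          push_cast; ring
        exact h2 ▸ h
      · intro v hv
        rw [hGsucc, LinearMap.comp_apply] at hv
        have h1 : G (m + 1) v ∈ L (((2 * m + 1 : ℕ) : ZMod n) + 1) := by
          have : ((2 * (m + 1) : ℕ) : ZMod n) = ((2 * m + 1 : ℕ) : ZMod n) + 1 := by
            push_cast; ring
          exact this ▸ hQker _ _ hv
        exact ih.2 v (hdisj _ _ (ih.1 v) h1)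
  -- write n = 2 * (m + 1)
  obtain ⟨k, hk⟩ := hev
  have hk1 : 1 ≤ k := by omega
  obtain ⟨m, rfl⟩ : ∃ m, k = m + 1 := ⟨k - 1, by omega⟩
  have hhalf : n / 2 = m + 1 := by omega
  have h2n : (2 * (m + 1) : ℕ) = n := by omega
  have hOdd : oddTerm n P Q = F (m + 1) := by rw [oddTerm, hhalf]
  have hEven : evenTerm n Q = G (m + 1) := by rw [evenTerm, hhalf]
  -- image of oddTerm lies in L 0
  have hOddMem : ∀ v, oddTerm n P Q v ∈ L 0 := by
    intro v
    have := (hF (m + 1)).1 v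
    rw [h2n, ZMod.natCast_self] at this
    rwa [hOdd]
  -- image of evenTerm lies in L (-1)
  have hcast : ((2 * m + 1 : ℕ) : ZMod n) = -1 := by
    have : ((2 * m + 1 : ℕ) : ZMod n) + 1 = 0 := by
      have : ((2 * m + 1 : ℕ) : ZMod n) + 1 = ((2 * (m + 1) : ℕ) : ZMod n) := by
        push_cast; ring
      rw [this, h2n, ZMod.natCast_self]
    linear_combination this
  have hEvenMem : ∀ v, evenTerm n Q v ∈ L (-1) := by
    intro v
    have := (hG m).1 v
    rw [hcast] at this
    rwa [hEven]
  -- injectivity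
  have hinj : Function.Injective ⇑(oddTerm n P Q + evenTerm n Q) := by
    rw [← LinearMap.ker_eq_bot, LinearMap.ker_eq_bot']
    intro v hv
    rw [LinearMap.add_apply] at hv
    have hL0 : oddTerm n P Q v ∈ L ((-1 : ZMod n) + 1) := by
      rw [neg_add_cancel]; exact hOddMem v
    have hLm1 : oddTerm n P Q v ∈ L (-1) := by
      have : oddTerm n P Q v = -(evenTerm n Q v) :=
        eq_neg_of_add_eq_zero_left hv
      rw [this]
      exact Submodule.neg_mem _ (hEvenMem v)
    have hodd0 : oddTerm n P Q v = 0 := hdisj (-1) _ hLm1 hL0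
    have heven0 : evenTerm n Q v = 0 := by
      rw [hodd0, zero_add] at hv; exact hv
    have hv1 : v ∈ L 1 := (hF (m + 1)).2 v (by rw [← hOdd]; exact hodd0)
    have hv0 : v ∈ L 0 := (hG m).2 v (by rw [← hEven]; exact heven0)
    exact hdisj 0 v hv0 (by rwa [zero_add])
  exact ⟨hinj, LinearMap.injective_iff_surjective.mp hinj⟩

end
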